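/- Let A be a d×d Hermitian matrix with non-increasingly ordered eigenvalue vector α, and let F, G : ℝ^d → ℂ^d be block-constant in a neighborhood of α and satisfy F(x) = G(x) + o(‖x − α‖₂) as x → α. Then 𝓛_F is Fréchet differentiable at A if and only if 𝓛_G is, and in that case their Fréchet derivatives at A coincide. -/

import Mathlib

/-!
By Weyl's inequality, an ordered eigenvalue vector `ξ` of a Hermitian `B` satisfies
`‖ξ - α‖_∞ ≤ ‖B - A‖₂`. Writing `B = V diag(ξ) V*`, the difference
`𝓛_F(B) - 𝓛_G(B) = V diag(F ξ - G ξ) V*` therefore has Frobenius norm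
`‖diag(F ξ - G ξ)‖₂ = o(‖ξ - α‖) = o(‖B - A‖₂)`, and it vanishes at `A`. So `𝓛_F - 𝓛_G`
has derivative `0` at `A` within the Hermitian matrices.
-/

open Matrix Filter Asymptotics

attribute [local instance] Matrix.frobeniusNormedAddCommGroup Matrix.frobeniusNormedSpace

open Topology WithLp

namespace Matrix

variable {𝕜 : Type*} [RCLike 𝕜] {m n : Type*} [Fintype m] [Fintype n]

theorem frobenius_norm_sq_eq_re_trace (M : Matrix m n 𝕜) :
    ‖M‖ ^ 2 = RCLike.re (trace (M * Mᴴ)) := by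
  rw [frobenius_norm_def, ← Real.sqrt_eq_rpow, Real.sq_sqrt (by positivity)]
  simp only [trace, diag_apply, mul_apply, conjTranspose_apply, map_sum, RCLike.star_def,
    RCLike.mul_conj, ← RCLike.ofReal_pow, RCLike.ofReal_re, Real.rpow_two]

theorem frobenius_norm_unitary_conj [DecidableEq n] {V : Matrix n n 𝕜}
    (hV : V ∈ unitaryGroup n 𝕜) (M : Matrix n n 𝕜) : ‖V * M * star V‖ = ‖M‖ := by
  have hVV : star V * V = 1 := mem_unitaryGroup_iff'.mp hV
  refine (sq_eq_sq₀ (norm_nonneg _) (norm_nonneg _)).mp ?_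
  rw [frobenius_norm_sq_eq_re_trace, frobenius_norm_sq_eq_re_trace, ← star_eq_conjTranspose,
    ← star_eq_conjTranspose]
  congr 1
  have hconj : V * M * star V * star (V * M * star V) = V * (M * star M) * star V := by
    simp only [star_mul, star_star, Matrix.mul_assoc]
    rw [← Matrix.mul_assoc (star V) V, hVV, Matrix.one_mul]
  rw [hconj, trace_mul_comm, ← Matrix.mul_assoc, hVV, Matrix.one_mul]

theorem norm_toLp_mulVec_le_frobenius (M : Matrix m n 𝕜) (x : n → 𝕜) :
    ‖toLp 2 (M *ᵥ x)‖ ≤ ‖M‖ * ‖toLp 2 x‖ := by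
  simpa only [frobenius_norm_replicateCol, ← replicateCol_mulVec]
    using frobenius_norm_mul M (replicateCol Unit x)

theorem re_inner_mulVec_le_frobenius (M : Matrix n n 𝕜) (x : n → 𝕜) :
    RCLike.re (inner 𝕜 (toLp 2 x) (toLp 2 (M *ᵥ x))) ≤ ‖M‖ * ‖toLp 2 x‖ ^ 2 :=
  calc RCLike.re (inner 𝕜 (toLp 2 x) (toLp 2 (M *ᵥ x)))
      ≤ ‖toLp 2 x‖ * ‖toLp 2 (M *ᵥ x)‖ := re_inner_le_norm _ _
    _ ≤ ‖toLp 2 x‖ * (‖M‖ * ‖toLp 2 x‖) := by gcongr; exact norm_toLp_mulVec_le_frobenius M x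
    _ = ‖M‖ * ‖toLp 2 x‖ ^ 2 := by ring

section Unitary

variable [DecidableEq n] {U : Matrix n n 𝕜}

theorem inner_toLp_unitary_mulVec (hU : U ∈ unitaryGroup n 𝕜) (y z : n → 𝕜) :
    inner 𝕜 (toLp 2 (U *ᵥ y)) (toLp 2 (U *ᵥ z)) = inner 𝕜 (toLp 2 y) (toLp 2 z) :=
  ContinuousLinearMap.inner_map_map_of_mem_unitary
    (Unitary.map_mem (toEuclideanCLM (n := n) (𝕜 := 𝕜)) hU) (toLp 2 y) (toLp 2 z)

theorem norm_toLp_unitary_mulVec (hU : U ∈ unitaryGroup n 𝕜) (y : n → 𝕜) :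
    ‖toLp 2 (U *ᵥ y)‖ = ‖toLp 2 y‖ :=
  ContinuousLinearMap.norm_map_of_mem_unitary
    (Unitary.map_mem (toEuclideanCLM (n := n) (𝕜 := 𝕜)) hU) (toLp 2 y)

theorem inner_toLp_unitary_conj_mulVec (hU : U ∈ unitaryGroup n 𝕜) (D : Matrix n n 𝕜)
    (y : n → 𝕜) :
    inner 𝕜 (toLp 2 (U *ᵥ y)) (toLp 2 ((U * D * star U) *ᵥ (U *ᵥ y)))
      = inner 𝕜 (toLp 2 y) (toLp 2 (D *ᵥ y)) := by
  rw [mulVec_mulVec, Matrix.mul_assoc, mem_unitaryGroup_iff'.mp hU, Matrix.mul_one,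
    ← mulVec_mulVec, inner_toLp_unitary_mulVec hU]

end Unitary

theorem re_inner_diagonal_mulVec [DecidableEq n] (w : n → ℝ) (y : n → 𝕜) :
    RCLike.re (inner 𝕜 (toLp 2 y) (toLp 2 (diagonal (fun i => (w i : 𝕜)) *ᵥ y)))
      = ∑ i, w i * ‖y i‖ ^ 2 := by
  simp only [EuclideanSpace.inner_toLp_toLp, mulVec_diagonal, dotProduct, Pi.star_apply,
    RCLike.star_def, mul_assoc, RCLike.mul_conj, map_sum, ← RCLike.ofReal_pow,
    ← RCLike.ofReal_mul, RCLike.ofReal_re]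

theorem mul_norm_sq_le_re_inner_diagonal_mulVec [DecidableEq n] {w : n → ℝ} {c : ℝ}
    {y : n → 𝕜} (h : ∀ i, y i ≠ 0 → c ≤ w i) :
    c * ‖toLp 2 y‖ ^ 2
      ≤ RCLike.re (inner 𝕜 (toLp 2 y) (toLp 2 (diagonal (fun i => (w i : 𝕜)) *ᵥ y))) := by
  rw [re_inner_diagonal_mulVec, EuclideanSpace.norm_sq_eq, Finset.mul_sum]
  refine Finset.sum_le_sum fun i _ => ?_
  by_cases hi : y i = 0
  · simp [hi]
  · exact mul_le_mul_of_nonneg_right (h i hi) (sq_nonneg _)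

theorem re_inner_diagonal_mulVec_le_mul_norm_sq [DecidableEq n] {w : n → ℝ} {c : ℝ}
    {y : n → 𝕜} (h : ∀ i, y i ≠ 0 → w i ≤ c) :
    RCLike.re (inner 𝕜 (toLp 2 y) (toLp 2 (diagonal (fun i => (w i : 𝕜)) *ᵥ y)))
      ≤ c * ‖toLp 2 y‖ ^ 2 := by
  rw [re_inner_diagonal_mulVec, EuclideanSpace.norm_sq_eq, Finset.mul_sum]
  refine Finset.sum_le_sum fun i _ => ?_
  by_cases hi : y i = 0
  · simp [hi]
  · exact mul_le_mul_of_nonneg_right (h i hi) (sq_nonneg _)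

section Weyl

variable {d : ℕ}

theorem exists_ne_zero_vanishing_above_and_mulVec_vanishing_below
    (W : Matrix (Fin d) (Fin d) 𝕜) (k : Fin d) :
    ∃ y : Fin d → 𝕜, y ≠ 0 ∧ (∀ i, k < i → y i = 0) ∧ ∀ i, i < k → (W *ᵥ y) i = 0 := by
  let f : (Fin d → 𝕜) →ₗ[𝕜] (Set.Ioi k → 𝕜) × (Set.Iio k → 𝕜) :=
    (LinearMap.funLeft 𝕜 𝕜 Subtype.val).prod (LinearMap.funLeft 𝕜 𝕜 Subtype.val ∘ₗ W.mulVecLin)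
  have hdim : Module.finrank 𝕜 ((Set.Ioi k → 𝕜) × (Set.Iio k → 𝕜))
      < Module.finrank 𝕜 (Fin d → 𝕜) := by
    simp only [Module.finrank_prod, Module.finrank_fintype_fun_eq_card, Fintype.card_Ioi,
      Fintype.card_Iio, Fin.card_Ioi, Fin.card_Iio, Fintype.card_fin]
    have := k.isLt
    omega
  obtain ⟨y, hy, hy0⟩ :=
    Submodule.exists_mem_ne_zero_of_ne_bot (LinearMap.ker_ne_bot_of_finrank_lt (f := f) hdim)
  simp only [f, LinearMap.mem_ker, LinearMap.prod_apply, Prod.ext_iff, funext_iff,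
    Subtype.forall] at hy
  exact ⟨y, hy0, hy.1, hy.2⟩

theorem sub_le_frobenius_norm_sub_of_antitone {U V A B : Matrix (Fin d) (Fin d) 𝕜}
    {α ξ : Fin d → ℝ} (hU : U ∈ unitaryGroup (Fin d) 𝕜) (hV : V ∈ unitaryGroup (Fin d) 𝕜)
    (hα : Antitone α) (hξ : Antitone ξ)
    (hA : A = U * diagonal (fun i => (α i : 𝕜)) * star U)
    (hB : B = V * diagonal (fun i => (ξ i : 𝕜)) * star V) (k : Fin d) :
    ξ k - α k ≤ ‖B - A‖ := by
  -- Min–max: `x` lies both in the span of the top `k + 1` eigenvectors of `B`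
  -- and in the span of the bottom `d - k` eigenvectors of `A`.
  obtain ⟨y, hy0, hy, hz⟩ :=
    exists_ne_zero_vanishing_above_and_mulVec_vanishing_below (star U * V) k
  set x := V *ᵥ y
  set z := (star U * V) *ᵥ y
  have hUz : U *ᵥ z = x := by
    rw [mulVec_mulVec, ← Matrix.mul_assoc, mem_unitaryGroup_iff.mp hU, Matrix.one_mul]
  have hxy : ‖toLp 2 x‖ = ‖toLp 2 y‖ := norm_toLp_unitary_mulVec hV y
  have hx : 0 < ‖toLp 2 x‖ := by
    rw [hxy, norm_pos_iff]
    exact fun h => hy0 (congrArg ofLp h)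
  have hBx : ξ k * ‖toLp 2 x‖ ^ 2 ≤ RCLike.re (inner 𝕜 (toLp 2 x) (toLp 2 (B *ᵥ x))) := by
    rw [hB, inner_toLp_unitary_conj_mulVec hV, hxy]
    exact mul_norm_sq_le_re_inner_diagonal_mulVec fun i hi =>
      hξ (not_lt.mp fun hki => hi (hy i hki))
  have hAx : RCLike.re (inner 𝕜 (toLp 2 x) (toLp 2 (A *ᵥ x))) ≤ α k * ‖toLp 2 x‖ ^ 2 := by
    rw [← hUz, hA, inner_toLp_unitary_conj_mulVec hU, norm_toLp_unitary_mulVec hU]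
    exact re_inner_diagonal_mulVec_le_mul_norm_sq fun i hi =>
      hα (not_lt.mp fun hik => hi (hz i hik))
  have hBAx := re_inner_mulVec_le_frobenius (B - A) x
  rw [sub_mulVec, toLp_sub, inner_sub_right, map_sub] at hBAx
  have : (ξ k - α k) * ‖toLp 2 x‖ ^ 2 ≤ ‖B - A‖ * ‖toLp 2 x‖ ^ 2 := by linarith
  exact le_of_mul_le_mul_right this (by positivity)

theorem norm_sub_le_frobenius_norm_sub_of_antitone {U V A B : Matrix (Fin d) (Fin d) 𝕜}
    {α ξ : Fin d → ℝ} (hU : U ∈ unitaryGroup (Fin d) 𝕜) (hV : V ∈ unitaryGroup (Fin d) 𝕜)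
    (hα : Antitone α) (hξ : Antitone ξ)
    (hA : A = U * diagonal (fun i => (α i : 𝕜)) * star U)
    (hB : B = V * diagonal (fun i => (ξ i : 𝕜)) * star V) :
    ‖ξ - α‖ ≤ ‖B - A‖ := by
  refine (pi_norm_le_iff_of_nonneg (norm_nonneg _)).mpr fun k => ?_
  rw [Pi.sub_apply, Real.norm_eq_abs, abs_sub_le_iff]
  exact ⟨sub_le_frobenius_norm_sub_of_antitone hU hV hα hξ hA hB k,
    norm_sub_rev A B ▸ sub_le_frobenius_norm_sub_of_antitone hV hU hξ hα hB hA k⟩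

end Weyl

theorem submatrix_id_mem_unitaryGroup [DecidableEq n] {W : Matrix n n 𝕜}
    (hW : W ∈ unitaryGroup n 𝕜) (σ : Equiv.Perm n) :
    W.submatrix id σ ∈ unitaryGroup n 𝕜 := by
  rw [mem_unitaryGroup_iff', star_eq_conjTranspose, conjTranspose_submatrix]
  refine (submatrix_mul_equiv Wᴴ W σ (Equiv.refl n) σ).trans ?_
  rw [← star_eq_conjTranspose, mem_unitaryGroup_iff'.mp hW, submatrix_one_equiv]

theorem mul_diagonal_mul_star_eq_submatrix [DecidableEq n] (W : Matrix n n 𝕜) (μ : n → 𝕜)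
    (σ : Equiv.Perm n) :
    W * diagonal μ * star W
      = W.submatrix id σ * diagonal (μ ∘ σ) * star (W.submatrix id σ) := by
  rw [star_eq_conjTranspose, star_eq_conjTranspose, conjTranspose_submatrix,
    ← submatrix_diagonal_equiv, submatrix_mul_equiv, submatrix_mul_equiv, submatrix_id_id]

theorem IsHermitian.exists_antitone_diagonalization {d : ℕ} {B : Matrix (Fin d) (Fin d) 𝕜}
    (hB : B.IsHermitian) :
    ∃ (V : Matrix (Fin d) (Fin d) 𝕜) (ξ : Fin d → ℝ), V ∈ unitaryGroup (Fin d) 𝕜 ∧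
      Antitone ξ ∧ B = V * diagonal (fun i => (ξ i : 𝕜)) * star V := by
  let σ : Equiv.Perm (Fin d) := Fin.revPerm.trans (Tuple.sort hB.eigenvalues)
  refine ⟨_, hB.eigenvalues ∘ σ, submatrix_id_mem_unitaryGroup hB.eigenvectorUnitary.2 σ,
    (Tuple.monotone_sort hB.eigenvalues).comp_antitone Fin.rev_anti, ?_⟩
  conv_lhs => rw [hB.spectral_theorem, Unitary.conjStarAlgAut_apply,
    mul_diagonal_mul_star_eq_submatrix _ _ σ]
  rfl

end Matrix

theorem hasFDerivWithinAt_iff_of_isLittleO {𝕜 E F : Type*} [NontriviallyNormedField 𝕜]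
    [NormedAddCommGroup E] [NormedSpace 𝕜 E] [NormedAddCommGroup F] [NormedSpace 𝕜 F]
    {f g : E → F} {L : E →L[𝕜] F}
    {s : Set E} {a : E} (hfg : (fun x => f x - g x) =o[𝓝[s] a] (fun x => x - a)) (ha : a ∈ s) :
    HasFDerivWithinAt f L s a ↔ HasFDerivWithinAt g L s a := by
  have hfga : f a - g a = 0 := by
    simpa using (hfg.bound one_pos).self_of_nhdsWithin ha
  have h0 : HasFDerivWithinAt (fun x => f x - g x) (0 : E →L[𝕜] F) s a := by
    rw [hasFDerivWithinAt_iff_isLittleO]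
    simpa [hfga] using hfg
  constructor
  · intro hf
    simpa using hf.fun_sub h0
  · intro hg
    simpa using hg.fun_add h0

section SpectralLift

open Matrix

variable {𝕜 : Type*} [RCLike 𝕜] {d : ℕ}

/-- `Φ` agrees with `𝓛_H` at every Hermitian matrix whose ordered eigenvalue vector lies in `s`. -/
def IsSpectralLiftOn (s : Set (Fin d → ℝ)) (H : (Fin d → ℝ) → Fin d → 𝕜)
    (Φ : Matrix (Fin d) (Fin d) 𝕜 → Matrix (Fin d) (Fin d) 𝕜) : Prop :=
  ∀ (B V : Matrix (Fin d) (Fin d) 𝕜) (ξ : Fin d → ℝ),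
    V ∈ unitaryGroup (Fin d) 𝕜 → Antitone ξ → ξ ∈ s →
    B = V * diagonal (fun i => (ξ i : 𝕜)) * star V → Φ B = V * diagonal (H ξ) * star V

variable {s : Set (Fin d → ℝ)} {H H' : (Fin d → ℝ) → Fin d → 𝕜}
  {Φ Φ' : Matrix (Fin d) (Fin d) 𝕜 → Matrix (Fin d) (Fin d) 𝕜}

theorem IsSpectralLiftOn.sub (hΦ : IsSpectralLiftOn s H Φ) (hΦ' : IsSpectralLiftOn s H' Φ') :
    IsSpectralLiftOn s (fun x => H x - H' x) (fun B => Φ B - Φ' B) := by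
  intro B V ξ hV hξ hξs hB
  beta_reduce
  rw [hΦ B V ξ hV hξ hξs hB, hΦ' B V ξ hV hξ hξs hB, ← Matrix.sub_mul, ← Matrix.mul_sub,
    diagonal_sub]
  rfl

theorem IsSpectralLiftOn.isLittleO (hΦ : IsSpectralLiftOn s H Φ) {α : Fin d → ℝ}
    (hs : s ∈ 𝓝 α) (hH : H =o[𝓝 α] (fun x => x - α)) {A U : Matrix (Fin d) (Fin d) 𝕜}
    (hU : U ∈ unitaryGroup (Fin d) 𝕜) (hα : Antitone α)
    (hA : A = U * diagonal (fun i => (α i : 𝕜)) * star U) :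
    Φ =o[𝓝[{B | B.IsHermitian}] A] (fun B => B - A) := by
  have hdiag : ∀ B : Matrix (Fin d) (Fin d) 𝕜, ∃ (V : Matrix (Fin d) (Fin d) 𝕜) (ξ : Fin d → ℝ),
      B.IsHermitian → V ∈ unitaryGroup (Fin d) 𝕜 ∧ Antitone ξ ∧
        B = V * diagonal (fun i => (ξ i : 𝕜)) * star V := by
    intro B
    by_cases hB : B.IsHermitian
    · obtain ⟨V, ξ, h⟩ := hB.exists_antitone_diagonalization
      exact ⟨V, ξ, fun _ => h⟩
    · exact ⟨0, 0, fun h => absurd h hB⟩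
  choose V ξ hVξ using hdiag
  have hherm : ∀ᶠ B in 𝓝[{B | B.IsHermitian}] A, B.IsHermitian := self_mem_nhdsWithin
  have hξA : (fun B => ξ B - α) =O[𝓝[{B | B.IsHermitian}] A] (fun B => B - A) := by
    refine IsBigO.of_bound 1 (hherm.mono fun B hB => ?_)
    obtain ⟨hV, hξ, hB⟩ := hVξ B hB
    rw [one_mul]
    exact norm_sub_le_frobenius_norm_sub_of_antitone hU hV hα hξ hA hB
  have hlim : Tendsto ξ (𝓝[{B | B.IsHermitian}] A) (𝓝 α) := by
    refine tendsto_sub_nhds_zero_iff.mp (hξA.trans_tendsto ?_)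
    exact tendsto_sub_nhds_zero_iff.mpr (tendsto_nhdsWithin_of_tendsto_nhds tendsto_id)
  have hΦH : Φ =O[𝓝[{B | B.IsHermitian}] A] (fun B => diagonal (H (ξ B))) := by
    refine IsBigO.of_bound' ?_
    filter_upwards [hherm, hlim.eventually hs] with B hB hξs
    obtain ⟨hV, hξ, hBV⟩ := hVξ B hB
    rw [hΦ B (V B) (ξ B) hV hξ hξs hBV, frobenius_norm_unitary_conj hV]
  have hdiagH : (fun B => diagonal (H (ξ B))) =O[𝓝[{B | B.IsHermitian}] A] (fun B => H (ξ B)) :=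
    (LinearMap.toContinuousLinearMap (diagonalLinearMap (Fin d) 𝕜 𝕜)).isBigO_comp _ _
  exact (hΦH.trans hdiagH).trans_isLittleO ((hH.comp_tendsto hlim).trans_isBigO hξA)

end SpectralLift

theorem LF_differentiable_iff_of_littleO_general {d : ℕ}
    (F G : (Fin d → ℝ) → Fin d → ℂ)
    (A U : Matrix (Fin d) (Fin d) ℂ) (α : Fin d → ℝ)
    (LF LG : Matrix (Fin d) (Fin d) ℂ → Matrix (Fin d) (Fin d) ℂ)
    (s : Set (Fin d → ℝ))
    (hA : A.IsHermitian)
    (hU : U ∈ Matrix.unitaryGroup (Fin d) ℂ)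
    (hα : Antitone α)
    (hAdec : A = U * Matrix.diagonal (fun i => (α i : ℂ)) * star U)
    (hs : s ∈ nhds α)
    -- `F(x) = G(x) + o(‖x − α‖₂)` as `x → α`:
    (ho : (fun x => F x - G x) =o[nhds α] (fun x => x - α))
    -- `LF` and `LG` are the matrix functions `𝓛_F` and `𝓛_G`:
    (hLF : ∀ (B V : Matrix (Fin d) (Fin d) ℂ) (ξ : Fin d → ℝ),
      V ∈ Matrix.unitaryGroup (Fin d) ℂ → Antitone ξ → ξ ∈ s →
      B = V * Matrix.diagonal (fun i => (ξ i : ℂ)) * star V →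
      LF B = V * Matrix.diagonal (F ξ) * star V)
    (hLG : ∀ (B V : Matrix (Fin d) (Fin d) ℂ) (ξ : Fin d → ℝ),
      V ∈ Matrix.unitaryGroup (Fin d) ℂ → Antitone ξ → ξ ∈ s →
      B = V * Matrix.diagonal (fun i => (ξ i : ℂ)) * star V →
      LG B = V * Matrix.diagonal (G ξ) * star V) :
    ∀ L : Matrix (Fin d) (Fin d) ℂ →L[ℝ] Matrix (Fin d) (Fin d) ℂ,
      HasFDerivWithinAt LF L {B | B.IsHermitian} A ↔
      HasFDerivWithinAt LG L {B | B.IsHermitian} A := fun _ =>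
  hasFDerivWithinAt_iff_of_isLittleO
    ((IsSpectralLiftOn.sub hLF hLG).isLittleO hs ho hU hα hAdec) hA

/-- **Lemma (first-order data determines the derivative of `𝓛_F`).**
Let `A` be Hermitian with non-increasingly ordered eigenvalue vector `α`, and
let `F, G : ℝ^d → ℂ^d` be block-constant in a neighborhood `s` of `α` with
`F(x) = G(x) + o(‖x − α‖)` as `x → α`.  Then `𝓛_F` is Fréchet differentiable
at `A` (as a map on the real normed space of Hermitian matrices) if and only
if `𝓛_G` is, and their Fréchet derivatives at `A` coincide. -/
theorem LF_differentiable_iff_of_littleO {d : ℕ}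
    (F G : (Fin d → ℝ) → Fin d → ℂ)
    (A U : Matrix (Fin d) (Fin d) ℂ) (α : Fin d → ℝ)
    (LF LG : Matrix (Fin d) (Fin d) ℂ → Matrix (Fin d) (Fin d) ℂ)
    (s : Set (Fin d → ℝ))
    (hA : A.IsHermitian)
    (hU : U ∈ Matrix.unitaryGroup (Fin d) ℂ)
    (hα : Antitone α)
    (hAdec : A = U * Matrix.diagonal (fun i => (α i : ℂ)) * star U)
    -- `F` and `G` are block-constant in the neighborhood `s` of `α`:
    (hs : s ∈ nhds α)
    (hbcF : ∀ x ∈ s, ∀ m n, x m = x n → F x m = F x n)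
    (hbcG : ∀ x ∈ s, ∀ m n, x m = x n → G x m = G x n)
    -- `F(x) = G(x) + o(‖x − α‖₂)` as `x → α`:
    (ho : (fun x => F x - G x) =o[nhds α] (fun x => x - α))
    -- `LF` and `LG` are the matrix functions `𝓛_F` and `𝓛_G`:
    (hLF : ∀ (B V : Matrix (Fin d) (Fin d) ℂ) (ξ : Fin d → ℝ),
      V ∈ Matrix.unitaryGroup (Fin d) ℂ → Antitone ξ → ξ ∈ s →
      B = V * Matrix.diagonal (fun i => (ξ i : ℂ)) * star V →
      LF B = V * Matrix.diagonal (F ξ) * star V)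
    (hLG : ∀ (B V : Matrix (Fin d) (Fin d) ℂ) (ξ : Fin d → ℝ),
      V ∈ Matrix.unitaryGroup (Fin d) ℂ → Antitone ξ → ξ ∈ s →
      B = V * Matrix.diagonal (fun i => (ξ i : ℂ)) * star V →
      LG B = V * Matrix.diagonal (G ξ) * star V) :
    ∀ L : Matrix (Fin d) (Fin d) ℂ →L[ℝ] Matrix (Fin d) (Fin d) ℂ,
      HasFDerivWithinAt LF L {B | B.IsHermitian} A ↔
      HasFDerivWithinAt LG L {B | B.IsHermitian} A :=
  LF_differentiable_iff_of_littleO_general F G A U α LF LG s hA hU hα hAdec hs ho hLF hLG
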